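/- arXiv:cs/0610057 — 6 statements merged into one kernel-verified Lean document; each statement's English description precedes it below -/
import Mathlib

section
/- (Singleton-like bound) Let q be a prime power, m, n positive integers, and let C be a set of m×n matrices over F_q with |C| ≥ 2 and minimum rank distance d. Then |C| ≤ q^{min(m(n-d+1), n(m-d+1))}. -/
/-- `d` is the minimum rank distance of the code `C` (a set of `m × n` matrices over `F`). -/
def IsMinRankDist {F : Type*} [Field F] [Fintype F] {m n : ℕ}
    (C : Set (Matrix (Fin m) (Fin n) F)) (d : ℕ) : Prop :=
  (∀ c₁ ∈ C, ∀ c₂ ∈ C, c₁ ≠ c₂ → d ≤ (c₁ - c₂).rank) ∧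
  ∃ c₁ ∈ C, ∃ c₂ ∈ C, c₁ ≠ c₂ ∧ (c₁ - c₂).rank = d

/-!
Singleton bound by puncturing: keep only `n - d + 1` columns of each codeword. Two codewords
with the same punctured image differ by a matrix supported on the `d - 1` deleted columns,
hence of rank at most `d - 1 < d`; so puncturing is injective on `C` and
`|C| ≤ q ^ (m * (n - d + 1))`. Transposing the code gives the bound with `m` and `n` swapped.
-/

open Finset

namespace Matrix

variable {ι κ F : Type*} [Fintype κ] [Field F]

theorem rank_pos_of_ne_zero {A : Matrix ι κ F} (hA : A ≠ 0) : 0 < A.rank := by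
  classical
  refine Nat.pos_of_ne_zero fun h => hA ?_
  have hrange : LinearMap.range A.mulVecLin = ⊥ := Submodule.finrank_eq_zero.mp h
  rw [LinearMap.range_eq_bot, ← toLin'_apply'] at hrange
  exact toLin'.map_eq_zero_iff.mp hrange

theorem rank_le_card_of_forall_notMem_eq_zero (A : Matrix ι κ F) (S : Finset κ)
    (h : ∀ i, ∀ j ∉ S, A i j = 0) : A.rank ≤ #S := by
  classical
  set D : Matrix κ κ F := diagonal fun j => if j ∈ S then 1 else 0
  have hA : A = A * D := by
    ext i j
    by_cases hj : j ∈ S <;> simp [D, hj, h i j]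
  calc A.rank = (A * D).rank := congrArg rank hA
    _ ≤ D.rank := rank_mul_le_right _ _
    _ = #S := by simp [D, rank_diagonal, Fintype.card_subtype]

variable [Fintype ι] [Fintype F]

theorem card_le_pow_of_lt_rank_sub (C : Set (Matrix ι κ F)) (r : ℕ)
    (hC : ∀ c₁ ∈ C, ∀ c₂ ∈ C, c₁ ≠ c₂ → r < (c₁ - c₂).rank) :
    Nat.card C ≤ Fintype.card F ^ (Fintype.card ι * (Fintype.card κ - r)) := by
  classical
  obtain ⟨S, -, hS⟩ := exists_subset_card_eq (Nat.sub_le (Fintype.card κ) r)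
  have hinj : Function.Injective fun (c : C) (i : ι) (j : S) => (c : Matrix ι κ F) i j := by
    intro c₁ c₂ heq
    by_contra hne
    have hrank := hC _ c₁.2 _ c₂.2 (Subtype.coe_ne_coe.mpr hne)
    have hle := rank_le_card_of_forall_notMem_eq_zero
      ((c₁ : Matrix ι κ F) - (c₂ : Matrix ι κ F)) Sᶜ fun i j hj => sub_eq_zero.mpr (congrFun (congrFun heq i) ⟨j, by simpa using hj⟩)
    rw [card_compl, hS] at hle
    omega
  calc Nat.card C ≤ Nat.card (ι → S → F) := Nat.card_le_card_of_injective _ hinj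
    _ = Fintype.card F ^ (Fintype.card ι * (Fintype.card κ - r)) := by
      simp [Nat.card_eq_fintype_card, hS, ← pow_mul, mul_comm]

theorem card_le_pow_of_lt_rank_sub' (C : Set (Matrix ι κ F)) (r : ℕ)
    (hC : ∀ c₁ ∈ C, ∀ c₂ ∈ C, c₁ ≠ c₂ → r < (c₁ - c₂).rank) :
    Nat.card C ≤ Fintype.card F ^ (Fintype.card κ * (Fintype.card ι - r)) := by
  rw [← Nat.card_image_of_injective transpose_injective C]
  refine card_le_pow_of_lt_rank_sub _ r ?_
  rintro _ ⟨c₁, hc₁, rfl⟩ _ ⟨c₂, hc₂, rfl⟩ hne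
  rw [← transpose_sub, rank_transpose]
  exact hC c₁ hc₁ c₂ hc₂ fun h => hne (congrArg transpose h)

end Matrix

theorem stmt3_general (q : ℕ) (F : Type*) [Field F] [Fintype F] (hq : Fintype.card F = q)
    (m n : ℕ)
    (C : Set (Matrix (Fin m) (Fin n) F))
    (d : ℕ) (hd : IsMinRankDist C d) :
    Nat.card C ≤ q ^ min (m * (n - d + 1)) (n * (m - d + 1)) := by
  obtain ⟨hmin, c₁, -, c₂, -, hne, hrank⟩ := hd
  have hd_pos : 0 < d := hrank ▸ Matrix.rank_pos_of_ne_zero (sub_ne_zero.mpr hne)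
  have hdn : d ≤ n := hrank ▸ Matrix.rank_le_width _
  have hdm : d ≤ m := hrank ▸ Matrix.rank_le_height _
  have hlt : ∀ c₁ ∈ C, ∀ c₂ ∈ C, c₁ ≠ c₂ → d - 1 < (c₁ - c₂).rank :=
    fun c₁ h₁ c₂ h₂ hne => by have := hmin c₁ h₁ c₂ h₂ hne; omega
  have hcols := Matrix.card_le_pow_of_lt_rank_sub C (d - 1) hlt
  have hrows := Matrix.card_le_pow_of_lt_rank_sub' C (d - 1) hlt
  simp only [Fintype.card_fin, hq, show n - (d - 1) = n - d + 1 by omega,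
    show m - (d - 1) = m - d + 1 by omega] at hcols hrows
  rcases min_choice (m * (n - d + 1)) (n * (m - d + 1)) with h | h <;> rw [h] <;> assumption

theorem stmt3 (q : ℕ) (F : Type*) [Field F] [Fintype F] (hq : Fintype.card F = q)
    (m n : ℕ) (hm : 0 < m) (hn : 0 < n)
    (C : Set (Matrix (Fin m) (Fin n) F)) (hC : 2 ≤ Nat.card C)
    (d : ℕ) (hd : IsMinRankDist C d) :
    Nat.card C ≤ q ^ min (m * (n - d + 1)) (n * (m - d + 1)) :=
  stmt3_general q F hq m n C d hd
end

section
/- (Nonexistence of perfect codes in rank metric) Let q be a prime power and m, n positive integers. There is no perfect code in rank metric: for every set C of m×n matrices over F_q with |C| ≥ 2 and minimum rank distance d such that t = ⌊(d−1)/2⌋ ≥ 1, the strict inequality |C| · B_t < q^{mn} holds, where B_t is the number of m×n matrices over F_q of rank at most t; in particular the equality |C| · B_t = q^{mn} is impossible. -/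
/-- Number of `m × n` matrices over `F` of rank at most `t`. -/
noncomputable def ballCount (F : Type*) [Field F] [Fintype F] (m n t : ℕ) : ℕ :=
  Nat.card {A : Matrix (Fin m) (Fin n) F // A.rank ≤ t}

/-!
A rank-metric code with minimum distance `d ≤ m ≤ n` is determined by its top `m + 1 - d` rows
(two codewords agreeing there differ by a matrix of rank `≤ d - 1`), so it has at most
`q ^ ((m + 1 - d) * n)` words. Every matrix of rank `≤ t` is a product `B * C` with
`B : m × t` and `C : t × n`, and all pairs `(0, C)` give `0`, so `B_t < q ^ (t * (m + n))`.
Since `2 * t < d` and `t * m ≤ t * n`, the exponents add up to at most `m * n`.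
The case `n < m` follows by transposing the code.
-/

open Matrix

theorem natCard_matrix_fin {F : Type*} [Fintype F] (a b : ℕ) :
    Nat.card (Matrix (Fin a) (Fin b) F) = Fintype.card F ^ (a * b) := by
  simp [Matrix, ← pow_mul, mul_comm]

section

variable {F : Type*} [Field F]

theorem Matrix.rank_le_sub_of_submatrix_castLE_eq_zero {m k : ℕ} {n : Type*} [Fintype n]
    (hk : k ≤ m) (D : Matrix (Fin m) n F) (hD : D.submatrix (Fin.castLE hk) id = 0) :
    D.rank ≤ m - k := by
  classical
  have hrows : Function.support D.row ⊆ ({i : Fin m | ¬ (i : ℕ) < k} : Finset (Fin m)) := by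
    intro i hi
    simp only [Finset.coe_filter, Finset.mem_univ, true_and, Set.mem_ofPred_eq]
    intro hik
    exact hi (funext fun j => congrFun (congrFun hD ⟨i, hik⟩) j)
  refine (rank_le_card_of_support_subset _ _ hrows).trans_eq ?_
  rw [Finset.filter_not, Finset.card_sdiff_of_subset (Finset.filter_subset _ _),
    Fin.card_filter_val_lt, Finset.card_univ, Fintype.card_fin]
  omega

theorem natCard_le_of_pairwise_le_rank_sub [Fintype F] {m n d : ℕ}
    {C : Set (Matrix (Fin m) (Fin n) F)} (hC : C.Pairwise fun a b => d ≤ (a - b).rank)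
    (hd : 0 < d) (hdm : d ≤ m) :
    Nat.card C ≤ Fintype.card F ^ ((m + 1 - d) * n) := by
  have hk : m + 1 - d ≤ m := by omega
  let top : C → Matrix (Fin (m + 1 - d)) (Fin n) F := fun c => c.1.submatrix (Fin.castLE hk) id
  have htop : Function.Injective top := fun c₁ c₂ h => by
    by_contra hne
    have := rank_le_sub_of_submatrix_castLE_eq_zero hk (c₁.1 - c₂.1)
      (by ext i j; exact sub_eq_zero.mpr (congrFun (congrFun h i) j))
    have := hC c₁.2 c₂.2 (Subtype.coe_injective.ne hne)
    omega
  calc Nat.card C ≤ Nat.card (Matrix (Fin (m + 1 - d)) (Fin n) F) :=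
        Nat.card_le_card_of_injective top htop
    _ = Fintype.card F ^ ((m + 1 - d) * n) := natCard_matrix_fin _ n

theorem Matrix.exists_eq_mul_of_rank_le {m n : Type*} [Fintype m] [Fintype n] {t : ℕ}
    (A : Matrix m n F) (h : A.rank ≤ t) :
    ∃ (B : Matrix m (Fin t) F) (C : Matrix (Fin t) n F), A = B * C := by
  classical
  -- factor `A` through its column space, embedded in `F^t` by a map with a linear left inverse
  obtain ⟨ι, hι⟩ :
      ∃ ι : LinearMap.range A.mulVecLin →ₗ[F] (Fin t → F), Function.Injective ι :=
    finrank_le_iff_exists_linearMap.mp (by rwa [Module.finrank_fin_fun])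
  obtain ⟨π, hπ⟩ := ι.exists_leftInverse_of_injective (LinearMap.ker_eq_bot.mpr hι)
  refine ⟨LinearMap.toMatrix' ((LinearMap.range A.mulVecLin).subtype ∘ₗ π),
    LinearMap.toMatrix' (ι ∘ₗ A.mulVecLin.rangeRestrict), ?_⟩
  rw [← LinearMap.toMatrix'_comp, LinearMap.comp_assoc, ← LinearMap.comp_assoc _ ι, hπ,
    LinearMap.id_comp]
  exact (LinearMap.toMatrix'_toLin' A).symm

theorem ballCount_lt_pow [Fintype F] {m n t : ℕ} (hn : 0 < n) (ht : 0 < t) :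
    ballCount F m n t < Fintype.card F ^ (t * (m + n)) := by
  have : Nonempty (Fin t) := ⟨⟨0, ht⟩⟩
  have : Nonempty (Fin n) := ⟨⟨0, hn⟩⟩
  let mul : Matrix (Fin m) (Fin t) F × Matrix (Fin t) (Fin n) F →
      {A : Matrix (Fin m) (Fin n) F // A.rank ≤ t} :=
    fun p => ⟨p.1 * p.2, (rank_mul_le_right _ _).trans (rank_le_height _)⟩
  have hsurj : Function.Surjective mul := fun A => by
    obtain ⟨B, C, hBC⟩ := A.1.exists_eq_mul_of_rank_le A.2
    exact ⟨(B, C), Subtype.ext hBC.symm⟩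
  have hnotinj : ¬ Function.Injective mul := fun hinj => by
    obtain ⟨C, hC⟩ := exists_ne (0 : Matrix (Fin t) (Fin n) F)
    have : ((0, 0) : Matrix (Fin m) (Fin t) F × _) = (0, C) := hinj (by simp [mul])
    exact hC (congrArg Prod.snd this).symm
  calc ballCount F m n t
      < Nat.card (Matrix (Fin m) (Fin t) F × Matrix (Fin t) (Fin n) F) := by
        simp only [ballCount, Nat.card_eq_fintype_card]
        exact Fintype.card_lt_of_surjective_not_injective mul hsurj hnotinj
    _ = Fintype.card F ^ (t * (m + n)) := by
        rw [Nat.card_prod, natCard_matrix_fin, natCard_matrix_fin, ← pow_add]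
        ring_nf

theorem ballCount_comm [Fintype F] (m n t : ℕ) : ballCount F m n t = ballCount F n m t :=
  Nat.card_congr <| (transposeAddEquiv (Fin m) (Fin n) F).toEquiv.subtypeEquiv fun A => by
    simp [rank_transpose]

theorem Set.Pairwise.image_transpose {m n : Type*} [Fintype m] [Fintype n] {d : ℕ}
    {C : Set (Matrix m n F)} (hC : C.Pairwise fun a b => d ≤ (a - b).rank) :
    (transpose '' C).Pairwise fun a b => d ≤ (a - b).rank := by
  rw [transpose_injective.injOn.pairwise_image]
  exact hC.mono' fun a b h => by rwa [Function.onFun, ← transpose_sub, rank_transpose]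

theorem natCard_mul_ballCount_lt_of_le [Fintype F] {m n d t : ℕ} (hmn : m ≤ n)
    {C : Set (Matrix (Fin m) (Fin n) F)} (hC : C.Pairwise fun a b => d ≤ (a - b).rank)
    (hdm : d ≤ m) (ht : 0 < t) (htd : 2 * t < d) :
    Nat.card C * ballCount F m n t < Fintype.card F ^ (m * n) := by
  have hexp : (m + 1 - d) * n + t * (m + n) ≤ m * n := by
    have hk : m + 1 - d + 2 * t ≤ m := by omega
    calc (m + 1 - d) * n + t * (m + n) ≤ (m + 1 - d) * n + t * (n + n) := by gcongr
      _ = (m + 1 - d + 2 * t) * n := by ring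
      _ ≤ m * n := by gcongr
  calc Nat.card C * ballCount F m n t
      < Fintype.card F ^ ((m + 1 - d) * n) * Fintype.card F ^ (t * (m + n)) :=
        Nat.mul_lt_mul_of_le_of_lt (natCard_le_of_pairwise_le_rank_sub hC (by omega) hdm)
          (ballCount_lt_pow (by omega) ht) (by positivity)
    _ ≤ Fintype.card F ^ (m * n) := by
        rw [← pow_add]
        exact Nat.pow_le_pow_right Fintype.card_pos hexp

end

theorem stmt5_general (q : ℕ) (F : Type*) [Field F] [Fintype F] (hq : Fintype.card F = q)
    (m n : ℕ)
    (C : Set (Matrix (Fin m) (Fin n) F))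
    (d : ℕ) (hd : IsMinRankDist C d) (ht : 1 ≤ (d - 1) / 2) :
    Nat.card C * ballCount F m n ((d - 1) / 2) < q ^ (m * n) ∧
    Nat.card C * ballCount F m n ((d - 1) / 2) ≠ q ^ (m * n) := by
  subst hq
  obtain ⟨hC, c₁, -, c₂, -, -, hrank⟩ := hd
  replace hC : C.Pairwise fun a b => d ≤ (a - b).rank := hC
  have hdm : d ≤ m := hrank ▸ rank_le_height _
  have hdn : d ≤ n := by rw [← hrank, ← rank_transpose]; exact rank_le_height _
  have hlt : Nat.card C * ballCount F m n ((d - 1) / 2) < Fintype.card F ^ (m * n) := by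
    rcases le_total m n with hmn | hnm
    · exact natCard_mul_ballCount_lt_of_le hmn hC hdm (by omega) (by omega)
    · have := natCard_mul_ballCount_lt_of_le (t := (d - 1) / 2) hnm hC.image_transpose hdn
        (by omega) (by omega)
      rwa [Nat.card_image_of_injective transpose_injective, ← ballCount_comm, mul_comm n] at this
  exact ⟨hlt, hlt.ne⟩

/-- There are no perfect codes in rank metric. -/
theorem stmt5 (q : ℕ) (F : Type*) [Field F] [Fintype F] (hq : Fintype.card F = q)
    (m n : ℕ) (hm : 0 < m) (hn : 0 < n)
    (C : Set (Matrix (Fin m) (Fin n) F)) (hC : 2 ≤ Nat.card C)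
    (d : ℕ) (hd : IsMinRankDist C d) (ht : 1 ≤ (d - 1) / 2) :
    Nat.card C * ballCount F m n ((d - 1) / 2) < q ^ (m * n) ∧
    Nat.card C * ballCount F m n ((d - 1) / 2) ≠ q ^ (m * n) :=
  stmt5_general q F hq m n C d hd ht
end

section
/- (Gilbert–Varshamov-like existence bound) Let q be a prime power and m, n, M, d positive integers. If M · B_{d−1} < q^{mn}, where B_{d−1} is the number of m×n matrices over F_q of rank at most d−1, then there exists a set C of m×n matrices over F_q with |C| = M + 1 whose minimum rank distance is at least d. -/
lemma myRank_neg {F : Type*} [Field F] {m n : ℕ} (A : Matrix (Fin m) (Fin n) F) :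
    (-A).rank = A.rank := by
  have hneg : (-A).mulVecLin = -A.mulVecLin := by
    ext v i
    simp [Matrix.mulVecLin, Matrix.neg_mulVec]
  rw [Matrix.rank, Matrix.rank, hneg, LinearMap.range_neg]

/-- Gilbert–Varshamov-like existence bound for rank-metric codes. -/
theorem stmt6 (q : ℕ) (F : Type*) [Field F] [Fintype F] (hq : Fintype.card F = q)
    (m n M d : ℕ) (hm : 0 < m) (hn : 0 < n) (hM : 0 < M) (hd : 0 < d)
    (h : M * ballCount F m n (d - 1) < q ^ (m * n)) :
    ∃ C : Set (Matrix (Fin m) (Fin n) F), Nat.card C = M + 1 ∧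
      ∀ c₁ ∈ C, ∀ c₂ ∈ C, c₁ ≠ c₂ → d ≤ (c₁ - c₂).rank := by
  classical
  set t := d - 1 with ht
  -- cardinality of the full matrix space
  have hcardM : Fintype.card (Matrix (Fin m) (Fin n) F) = q ^ (m * n) := by
    show Fintype.card ((Fin m) → (Fin n) → F) = q ^ (m * n)
    simp [Fintype.card_fun, hq, ← pow_mul, Nat.mul_comm]
  -- each ball has cardinality ballCount
  have hball : ∀ c : Matrix (Fin m) (Fin n) F,
      (Finset.univ.filter fun A : Matrix (Fin m) (Fin n) F => (A - c).rank ≤ t).card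
        = ballCount F m n t := by
    intro c
    rw [ballCount, Nat.card_eq_fintype_card, Fintype.card_subtype]
    apply Finset.card_bij (fun A _ => A - c)
    · intro A hA
      simp only [Finset.mem_filter, Finset.mem_univ, true_and] at hA ⊢
      exact hA
    · intro A hA B hB hAB
      have := congrArg (· + c) hAB
      simpa using this
    · intro B hB
      simp only [Finset.mem_filter, Finset.mem_univ, true_and] at hB
      exact ⟨B + c, by simp [hB], by simp⟩
  -- greedy construction
  have key : ∀ k, k ≤ M + 1 → ∃ C : Finset (Matrix (Fin m) (Fin n) F),
      C.card = k ∧ ∀ c₁ ∈ C, ∀ c₂ ∈ C, c₁ ≠ c₂ → d ≤ (c₁ - c₂).rank := by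
    intro k
    induction k with
    | zero => intro _; exact ⟨∅, rfl, by simp⟩
    | succ k ih =>
      intro hk
      obtain ⟨C, hcard, hdist⟩ := ih (Nat.le_of_succ_le hk)
      set U := C.biUnion fun c =>
        Finset.univ.filter fun A : Matrix (Fin m) (Fin n) F => (A - c).rank ≤ t with hU
      have hUcard : U.card < Fintype.card (Matrix (Fin m) (Fin n) F) := by
        calc U.card ≤ ∑ c ∈ C,
              (Finset.univ.filter fun A : Matrix (Fin m) (Fin n) F => (A - c).rank ≤ t).card :=
              Finset.card_biUnion_le
          _ = C.card * ballCount F m n t := by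
              rw [Finset.sum_congr rfl fun c _ => hball c, Finset.sum_const, smul_eq_mul]
          _ ≤ M * ballCount F m n t := Nat.mul_le_mul_right _ (by omega)
          _ < q ^ (m * n) := h
          _ = Fintype.card (Matrix (Fin m) (Fin n) F) := hcardM.symm
      have hx : ∃ x : Matrix (Fin m) (Fin n) F, x ∉ U := by
        by_contra hco
        push_neg at hco
        have : U = Finset.univ := Finset.eq_univ_of_forall hco
        rw [this, Finset.card_univ] at hUcard
        omega
      obtain ⟨x, hx⟩ := hx
      have hxC : x ∉ C := by
        intro hxc
        exact hx (Finset.mem_biUnion.2 ⟨x, hxc, by simp⟩)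
      have hfar : ∀ c ∈ C, d ≤ (x - c).rank := by
        intro c hc
        by_contra hcon
        push_neg at hcon
        exact hx (Finset.mem_biUnion.2 ⟨c, hc, by
          simp only [Finset.mem_filter, Finset.mem_univ, true_and]
          omega⟩)
      refine ⟨insert x C, ?_, ?_⟩
      · rw [Finset.card_insert_of_notMem hxC, hcard]
      · intro c₁ hc₁ c₂ hc₂ hne
        rcases Finset.mem_insert.1 hc₁ with h1 | h1 <;>
          rcases Finset.mem_insert.1 hc₂ with h2 | h2
        · exact absurd (h1.trans h2.symm) hne
        · subst h1; exact hfar c₂ h2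
        · subst h2
          have := hfar c₁ h1
          rwa [← myRank_neg, neg_sub] at this
        · exact hdist c₁ h1 c₂ h2 hne
  obtain ⟨C, hcard, hdist⟩ := key (M + 1) le_rfl
  refine ⟨(C : Set (Matrix (Fin m) (Fin n) F)), ?_, ?_⟩
  · rw [Nat.card_coe_set_eq, Set.ncard_coe_finset, hcard]
  · intro c₁ hc₁ c₂ hc₂ hne
    exact hdist c₁ (by simpa using hc₁) c₂ (by simpa using hc₂) hne
end

section
/- Let q be a prime power and 0 < R < 1 a real number. For each n ≥ 2, let C_n be a code of length n over F_{q^n} (i.e. m = n) of size M(n) with minimum rank distance d(n) that is on GV, where log_q M(n) = R·n² (e.g. M(n) = q^{⌈Rn²⌉}). Then d(n)/n → 1 − √R as n → ∞. -/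
/-!
Write `t = d - 1` and `s = n - t`, so that `t (t + 2s) = n² - s²`. A matrix of rank at most `t` is
determined by `t` of its columns spanning its column space together with the coordinates of the
other `s` columns in them, while the products `[1; S] [P | Q]` with `P` invertible are distinct
matrices of rank at most `t`; hence `q^(n² - s² - t) ≤ B_t ≤ n^t q^(n² - s²)`. Fed into the two
GV inequalities, this pins `log_q M = R n²` to `n² - s²` up to `O(n log n)`, so `(s/n)² → R` and
`d/n = 1 + 1/n - s/n → 1 - √R`.
-/

open Matrix Filter Submodule Set Topology

section Rank

variable {K V ι : Type*} [DivisionRing K] [AddCommGroup V] [Module K V] [Fintype ι]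

theorem exists_embedding_span_eq (v : ι → V) {t : ℕ}
    (hv : Module.finrank K (span K (range v)) ≤ t) (ht : t ≤ Fintype.card ι) :
    ∃ f : Fin t ↪ ι, span K (range (v ∘ f)) = span K (range v) := by
  classical
  obtain ⟨κ, a, ha, hspan, hli⟩ := exists_linearIndependent' K v
  have : Fintype κ := Fintype.ofInjective a ha
  have hcard : (Finset.univ.image a).card ≤ t := by
    rwa [Finset.card_image_of_injective _ ha, Finset.card_univ, ← finrank_span_eq_card hli, hspan]
  obtain ⟨S, haS, -, hS⟩ :=
    Finset.exists_subsuperset_card_eq (Finset.subset_univ _) hcard (by simpa using ht)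
  let f : Fin t ↪ ι :=
    (S.equivFinOfCardEq hS).symm.toEmbedding.trans (Function.Embedding.subtype (· ∈ S))
  refine ⟨f, le_antisymm (span_mono (range_comp_subset_range _ _)) ?_⟩
  rw [← hspan]
  refine span_mono ?_
  rintro _ ⟨k, rfl⟩
  have hk : a k ∈ S := haS (Finset.mem_image_of_mem a (Finset.mem_univ k))
  exact ⟨S.equivFinOfCardEq hS ⟨a k, hk⟩, by simp [f]⟩

end Rank

theorem Matrix.rank_pos_of_ne_zero_s8 {K m n : Type*} [Field K] [Fintype n] [DecidableEq n]
    {A : Matrix m n K} (h : A ≠ 0) : 0 < A.rank := by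
  rw [Nat.pos_iff_ne_zero, Matrix.rank, Ne, Submodule.finrank_eq_zero, LinearMap.range_eq_bot,
    ← Matrix.toLin'_apply']
  simpa using h

theorem Nat.card_matrix {m n R : Type*} [Fintype m] [Fintype n] [Fintype R] :
    Nat.card (Matrix m n R) = Fintype.card R ^ (Fintype.card m * Fintype.card n) := by
  rw [Matrix, Nat.card_pi, Finset.prod_const, Nat.card_pi, Finset.prod_const,
    Nat.card_eq_fintype_card, Finset.card_univ, Finset.card_univ, ← pow_mul, mul_comm]

section Counting

variable {F : Type*} [Field F] [Fintype F]

theorem pow_mul_self_le_pow_mul_card_GL (t : ℕ) :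
    Fintype.card F ^ (t * t) ≤ Fintype.card F ^ t * Nat.card (GL (Fin t) F) := by
  set q := Fintype.card F
  have hq : 2 ≤ q := Fintype.one_lt_card
  have hfactor : ∀ i : Fin t, q ^ (t - 1) ≤ q ^ t - q ^ (i : ℕ) := by
    intro i
    have hit := i.isLt
    have hi : q ^ (i : ℕ) ≤ q ^ (t - 1) := Nat.pow_le_pow_right (by omega) (by omega)
    have ht : q ^ (t - 1) * 2 ≤ q ^ t := by
      rw [show t = t - 1 + 1 by omega, pow_succ, Nat.add_sub_cancel]
      exact Nat.mul_le_mul_left _ hq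
    omega
  rw [card_GL_field]
  calc q ^ (t * t) = q ^ t * ∏ _i : Fin t, q ^ (t - 1) := by
        rw [Finset.prod_const, Finset.card_univ, Fintype.card_fin, ← pow_mul, ← pow_add]
        congr 1
        cases t <;> simp [Nat.succ_mul]; ring
    _ ≤ q ^ t * ∏ i : Fin t, (q ^ t - q ^ (i : ℕ)) := by
        gcongr with i; exact hfactor i

theorem pow_le_pow_mul_ballCount (t a b : ℕ) :
    Fintype.card F ^ (t * (t + a + b)) ≤ Fintype.card F ^ t * ballCount F (t + a) (t + b) t := by
  set q := Fintype.card F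
  let embed : GL (Fin t) F × Matrix (Fin a) (Fin t) F × Matrix (Fin t) (Fin b) F →
      {A : Matrix (Fin (t + a)) (Fin (t + b)) F // A.rank ≤ t} := fun x =>
    ⟨reindex finSumFinEquiv finSumFinEquiv
      (fromRows (1 : Matrix (Fin t) (Fin t) F) x.2.1 * fromCols x.1.val x.2.2), by
      rw [rank_reindex]
      exact (rank_mul_le_right _ _).trans ((rank_le_card_height _).trans_eq (Fintype.card_fin t))⟩
  have hembed : Function.Injective embed := by
    rintro ⟨P, S, Q⟩ ⟨P', S', Q'⟩ h
    have h' := (reindex _ _).injective (congrArg Subtype.val h)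
    simp only [fromRows_mul, Matrix.one_mul] at h'
    obtain ⟨hPQ, hS⟩ := fromRows_inj h'
    obtain ⟨hP, rfl⟩ := fromCols_inj hPQ
    obtain rfl : P = P' := Units.ext hP
    rw [mul_fromCols, mul_fromCols] at hS
    refine Prod.ext rfl (Prod.ext ?_ rfl)
    calc S = S * P.val * (P⁻¹).val := by rw [Matrix.mul_assoc, Units.mul_inv, Matrix.mul_one]
      _ = S' * P.val * (P⁻¹).val := by rw [(fromCols_inj hS).1]
      _ = S' := by rw [Matrix.mul_assoc, Units.mul_inv, Matrix.mul_one]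
  calc q ^ (t * (t + a + b)) = q ^ (t * t) * (q ^ (a * t) * q ^ (t * b)) := by
        rw [← pow_add, ← pow_add]; ring_nf
    _ ≤ q ^ t * Nat.card (GL (Fin t) F) * (q ^ (a * t) * q ^ (t * b)) := by
        gcongr; exact pow_mul_self_le_pow_mul_card_GL t
    _ = q ^ t *
          Nat.card (GL (Fin t) F × Matrix (Fin a) (Fin t) F × Matrix (Fin t) (Fin b) F) := by
        simp only [Nat.card_prod, Nat.card_matrix, Fintype.card_fin, q]
        ring
    _ ≤ q ^ t * ballCount F (t + a) (t + b) t := by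
        gcongr; exact Nat.card_le_card_of_injective embed hembed

theorem ballCount_le (m t s : ℕ) :
    ballCount F m (t + s) t ≤ (t + s) ^ t * Fintype.card F ^ (t * (m + s)) := by
  classical
  set q := Fintype.card F
  let D := Σ f : Fin t ↪ Fin (t + s),
    Matrix (Fin t) (Fin m) F × Matrix {j // j ∉ Set.range f} (Fin t) F
  let decode : D → Matrix (Fin m) (Fin (t + s)) F := fun ⟨f, X, Z⟩ => Matrix.of fun r j =>
    if h : j ∈ Set.range f then X (f.invOfMemRange ⟨j, h⟩) r
    else ∑ i, Z ⟨j, h⟩ i * X i r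
  have hsub : {A | A.rank ≤ t} ⊆ Set.range decode := by
    intro A (hA : A.rank ≤ t)
    rw [rank_eq_finrank_span_cols] at hA
    obtain ⟨f, hf⟩ := exists_embedding_span_eq A.col hA (by simp)
    have hcoef : ∀ j, ∃ c : Fin t → F, ∑ i, c i • A.col (f i) = A.col j := fun j =>
      (mem_span_range_iff_exists_fun F).1 (hf ▸ subset_span ⟨j, rfl⟩)
    choose c hc using hcoef
    refine ⟨⟨f, fun i => A.col (f i), fun j i => c j i⟩, ?_⟩
    ext r j
    by_cases h : j ∈ Set.range f
    · obtain ⟨i, rfl⟩ := h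
      simp [decode, Function.Embedding.right_inv_of_invOfMemRange]
    · simp only [Set.mem_range, not_exists] at h
      simpa [decode, h] using congrFun (hc j) r
  have hcompl : ∀ f : Fin t ↪ Fin (t + s), Fintype.card {j // j ∉ Set.range f} = s := by
    intro f
    rw [Fintype.card_subtype_compl, Set.card_range_of_injective f.injective]
    simp
  calc ballCount F m (t + s) t = Nat.card {A | A.rank ≤ t} := rfl
    _ ≤ Nat.card (Set.range decode) := Nat.card_mono (Set.toFinite _) hsub
    _ ≤ Nat.card D := Finite.card_range_le decode
    _ = (t + s).descFactorial t * q ^ (t * (m + s)) := by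
        rw [Nat.card_sigma]
        simp only [Nat.card_prod, Nat.card_matrix, hcompl, Fintype.card_fin, Finset.sum_const,
          Finset.card_univ, Fintype.card_embedding_eq, smul_eq_mul]
        ring
    _ ≤ (t + s) ^ t * q ^ (t * (m + s)) := by
        gcongr; exact Nat.descFactorial_le_pow _ _

end Counting

namespace IsMinRankDist

variable {F : Type*} [Field F] [Fintype F] {m n d : ℕ} {C : Set (Matrix (Fin m) (Fin n) F)}

theorem pos (h : IsMinRankDist C d) : 0 < d := by
  obtain ⟨-, c₁, -, c₂, -, hne, rfl⟩ := h
  exact rank_pos_of_ne_zero_s8 (sub_ne_zero.2 hne)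

theorem le_height (h : IsMinRankDist C d) : d ≤ m := by
  obtain ⟨-, c₁, -, c₂, -, -, rfl⟩ := h
  exact rank_le_height _

theorem two_le_card (h : IsMinRankDist C d) : 2 ≤ Nat.card C := by
  obtain ⟨-, c₁, hc₁, c₂, hc₂, hne, -⟩ := h
  rw [Nat.card_coe_set_eq]
  exact (Set.one_lt_ncard_iff (Set.toFinite C)).2 ⟨c₁, c₂, hc₁, hc₂, hne⟩

end IsMinRankDist

section Logarithms

open Real

variable {q M B t s : ℕ}

theorem sq_le_logb_of_le_mul (hq : 1 < q) (hM : 0 < M) (hs : 0 < t + s)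
    (hGV : q ^ ((t + s) * (t + s)) ≤ M * B) (hB : B ≤ (t + s) ^ t * q ^ (t * (t + s + s))) :
    (s : ℝ) ^ 2 ≤ logb q M + t * logb q (t + s) := by
  have hle : (q : ℝ) ^ ((t + s) * (t + s)) ≤
      M * ((t + s : ℝ) ^ t * (q : ℝ) ^ (t * (t + s + s))) := by
    exact_mod_cast hGV.trans (Nat.mul_le_mul_left M hB)
  have hq1 : (1 : ℝ) < q := by exact_mod_cast hq
  have := logb_le_logb_of_le hq1 (by positivity) hle
  have hts : (t + s : ℝ) ≠ 0 := by exact_mod_cast hs.ne'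
  rw [logb_mul (by exact_mod_cast hM.ne') (by positivity),
    logb_mul (pow_ne_zero _ hts) (by positivity),
    logb_pow, logb_pow, logb_pow, logb_self_eq_one hq1] at this
  push_cast at this
  linarith

theorem logb_sub_le_sq_of_mul_lt (hq : 1 < q) (hM : 2 ≤ M)
    (hGV : (M - 1) * B < q ^ ((t + s) * (t + s))) (hB : q ^ (t * (t + s + s)) ≤ q ^ t * B) :
    logb q M - logb q 2 - t ≤ (s : ℝ) ^ 2 := by
  have hnat : (M - 1) * q ^ (t * (t + s + s)) ≤ q ^ (t + (t + s) * (t + s)) := by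
    calc (M - 1) * q ^ (t * (t + s + s)) ≤ (M - 1) * (q ^ t * B) := Nat.mul_le_mul_left _ hB
      _ = q ^ t * ((M - 1) * B) := by ring
      _ ≤ q ^ t * q ^ ((t + s) * (t + s)) := Nat.mul_le_mul_left _ hGV.le
      _ = q ^ (t + (t + s) * (t + s)) := (pow_add _ _ _).symm
  have hle :
      ((M : ℝ) - 1) * (q : ℝ) ^ (t * (t + s + s)) ≤ (q : ℝ) ^ (t + (t + s) * (t + s)) := by
    rw [← Nat.cast_pred (by omega)]
    exact_mod_cast hnat
  have hM1 : (2 : ℝ) ≤ M := by exact_mod_cast hM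
  have hq1 : (1 : ℝ) < q := by exact_mod_cast hq
  have := logb_le_logb_of_le hq1 (mul_pos (by linarith) (by positivity)) hle
  rw [logb_mul (by linarith) (by positivity), logb_pow, logb_pow, logb_self_eq_one hq1] at this
  have hhalf : logb q M - logb q 2 ≤ logb q (M - 1) := by
    rw [← logb_div (by linarith) two_ne_zero]
    exact logb_le_logb_of_le hq1 (by positivity) (by linarith)
  push_cast at this
  linarith

end Logarithms

theorem IsMinRankDist.bounds_of_gv {F : Type*} [Field F] [Fintype F] {n M d : ℕ}
    {R : ℝ} {C : Set (Matrix (Fin n) (Fin n) F)} (hd : IsMinRankDist C d) (hM : Nat.card C = M)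
    (hGV₁ : (M - 1) * ballCount F n n (d - 1) < Fintype.card F ^ (n * n))
    (hGV₂ : Fintype.card F ^ (n * n) ≤ M * ballCount F n n (d - 1))
    (hlog : Real.logb (Fintype.card F) M = R * (n : ℝ) ^ 2) :
    0 ≤ 1 + 1 / (n : ℝ) - d / n ∧ R - 1 / n ≤ (1 + 1 / (n : ℝ) - d / n) ^ 2 ∧
      (1 + 1 / (n : ℝ) - d / n) ^ 2 ≤ R + Real.logb (Fintype.card F) n / n := by
  set q := Fintype.card F
  have hq : 1 < q := Fintype.one_lt_card
  have h2M : 2 ≤ M := hM ▸ hd.two_le_card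
  obtain ⟨t, rfl⟩ : ∃ t, d = t + 1 := ⟨d - 1, (Nat.sub_add_cancel hd.pos).symm⟩
  obtain ⟨s, rfl⟩ : ∃ s, n = t + s := ⟨n - t, by have := hd.le_height; omega⟩
  have hs : 1 ≤ s := by have := hd.le_height; omega
  rw [Nat.add_sub_cancel] at hGV₁ hGV₂
  have hlower := logb_sub_le_sq_of_mul_lt hq h2M hGV₁ (pow_le_pow_mul_ballCount t s s)
  have hupper := sq_le_logb_of_le_mul hq (by omega) (by omega) hGV₂
    (by simpa only [add_assoc] using ballCount_le (F := F) (t + s) t s)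
  push_cast at hlog hlower hupper ⊢
  rw [hlog] at hlower hupper
  have hlog2 : Real.logb q 2 ≤ 1 := by
    rw [← Real.logb_self_eq_one (b := q) (by exact_mod_cast hq)]
    exact Real.logb_le_logb_of_le (by exact_mod_cast hq) two_pos (by exact_mod_cast hq)
  have hlogn : 0 ≤ Real.logb q (t + s) :=
    Real.logb_nonneg (by exact_mod_cast hq) (by norm_cast; omega)
  have hn : (0 : ℝ) < t + s := by positivity
  have hy : 1 + 1 / ((t : ℝ) + s) - (t + 1) / (t + s) = s / (t + s) := by field_simp; ring
  rw [hy, div_pow]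
  refine ⟨by positivity, ?_, ?_⟩
  · rw [le_div_iff₀ (by positivity)]
    have : (1 : ℝ) ≤ s := by exact_mod_cast hs
    field_simp
    linarith
  · rw [div_le_iff₀ (by positivity)]
    field_simp
    have : (t : ℝ) ≤ t + s := le_add_of_nonneg_right s.cast_nonneg
    nlinarith

theorem tendsto_sqrt_of_sq_squeeze {α : Type*} {l : Filter α} {x lo hi : α → ℝ} {R : ℝ}
    (hx : ∀ᶠ i in l, 0 ≤ x i) (hlo : Tendsto lo l (𝓝 R)) (hhi : Tendsto hi l (𝓝 R))
    (hlox : ∀ᶠ i in l, lo i ≤ x i ^ 2) (hxhi : ∀ᶠ i in l, x i ^ 2 ≤ hi i) :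
    Tendsto x l (𝓝 √R) :=
  (tendsto_of_tendsto_of_tendsto_of_le_of_le' hlo hhi hlox hxhi).sqrt.congr' <| by
    filter_upwards [hx] with i hi using Real.sqrt_sq hi

theorem tendsto_logb_natCast_div_self (b : ℝ) :
    Tendsto (fun n : ℕ => Real.logb b n / n) atTop (𝓝 0) := by
  have := (Real.isLittleO_log_id_atTop.tendsto_div_nhds_zero.comp
    tendsto_natCast_atTop_atTop).div_const (Real.log b)
  simpa [Real.logb, div_div, mul_comm] using this

theorem stmt8_general (q : ℕ) (F : Type*) [Field F] [Fintype F] (hq : Fintype.card F = q)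
    (R : ℝ) (M d : ℕ → ℕ)
    (hlog : ∀ n, 2 ≤ n → Real.logb q (M n) = R * (n : ℝ) ^ 2)
    (hcode : ∀ n, 2 ≤ n → ∃ C : Set (Matrix (Fin n) (Fin n) F),
      Nat.card C = M n ∧ IsMinRankDist C (d n) ∧
      (M n - 1) * ballCount F n n (d n - 1) < q ^ (n * n) ∧
      q ^ (n * n) ≤ M n * ballCount F n n (d n - 1)) :
    Filter.Tendsto (fun n => (d n : ℝ) / n) Filter.atTop (nhds (1 - Real.sqrt R)) := by
  subst hq
  set x : ℕ → ℝ := fun n => 1 + 1 / (n : ℝ) - d n / n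
  have hbounds : ∀ᶠ n in atTop, 0 ≤ x n ∧ R - 1 / n ≤ x n ^ 2 ∧
      x n ^ 2 ≤ R + Real.logb (Fintype.card F) n / n := by
    filter_upwards [eventually_ge_atTop 2] with n hn
    obtain ⟨C, hM, hd, hGV₁, hGV₂⟩ := hcode n hn
    exact hd.bounds_of_gv hM hGV₁ hGV₂ (hlog n hn)
  have hx : Tendsto x atTop (𝓝 √R) :=
    tendsto_sqrt_of_sq_squeeze (hbounds.mono fun _ h => h.1)
      (by simpa using tendsto_one_div_atTop_nhds_zero_nat.const_sub R)
      (by simpa using (tendsto_logb_natCast_div_self _).const_add R)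
      (hbounds.mono fun _ h => h.2.1) (hbounds.mono fun _ h => h.2.2)
  have hlim := (tendsto_one_div_atTop_nhds_zero_nat.const_add 1).sub hx
  simp only [add_zero, x, sub_sub_cancel] at hlim
  exact hlim

/-- For square codes (`m = n`) of constant rate `R` on GV, `d(n)/n → 1 - √R`. -/
theorem stmt8 (q : ℕ) (F : Type*) [Field F] [Fintype F] (hq : Fintype.card F = q)
    (R : ℝ) (hR0 : 0 < R) (hR1 : R < 1) (M d : ℕ → ℕ)
    (hlog : ∀ n, 2 ≤ n → Real.logb q (M n) = R * (n : ℝ) ^ 2)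
    (hcode : ∀ n, 2 ≤ n → ∃ C : Set (Matrix (Fin n) (Fin n) F),
      Nat.card C = M n ∧ IsMinRankDist C (d n) ∧
      (M n - 1) * ballCount F n n (d n - 1) < q ^ (n * n) ∧
      q ^ (n * n) ≤ M n * ballCount F n n (d n - 1)) :
    Filter.Tendsto (fun n => (d n : ℝ) / n) Filter.atTop (nhds (1 - Real.sqrt R)) :=
  stmt8_general q F hq R M d hlog hcode
end

section
/- There exists a constant C₁ > 0, depending only on the prime power q, such that for all integers m ≥ n ≥ 1, all integers N ≥ 2, every real λ ≥ 0, and every integer i with 1 ≤ i ≤ (m+n)/2 − √((m−n)²/4 + log_q N + (m+n)/2 + λ), the quantity p_i = (1 − B_{i−1}/q^{mn})^N − (1 − B_i/q^{mn})^N satisfies p_i ≤ C₁ · q^{−λ}. -/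
open Submodule Finset

theorem exists_finset_card_eq_forall_mem_span {K V ι : Type*} [DivisionRing K] [AddCommGroup V]
    [Module K V] [Fintype ι] (v : ι → V) {i : ℕ}
    (hrank : Module.finrank K (span K (Set.range v)) ≤ i) (hi : i ≤ Fintype.card ι) :
    ∃ J : Finset ι, #J = i ∧ ∀ j, v j ∈ span K (v '' J) := by
  classical
  obtain ⟨b, -, -, hspan, hli⟩ :=
    exists_linearIndepOn_extension (linearIndepOn_empty K v) (Set.subset_univ _)
  have : FiniteDimensional K (span K (Set.range v)) :=
    FiniteDimensional.span_of_finite K (Set.finite_range v)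
  have hcard : #b.toFinset ≤ i := calc
    #b.toFinset = Module.finrank K (span K (Set.range fun j : b => v j)) := by
      rw [finrank_span_eq_card hli.linearIndependent, Set.toFinset_card]
    _ ≤ Module.finrank K (span K (Set.range v)) :=
      Submodule.finrank_mono (span_mono (Set.range_comp_subset_range _ v))
    _ ≤ i := hrank
  obtain ⟨J, hbJ, hJ⟩ := Finset.exists_superset_card_eq hcard hi
  refine ⟨J, hJ, fun j => span_mono (Set.image_mono ?_) (hspan ⟨j, trivial, rfl⟩)⟩
  simpa using hbJ

theorem Matrix.natCard_rank_le_le {m n F : Type*} [Fintype m] [Fintype n] [DecidableEq n]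
    [Field F] [Fintype F] {i : ℕ} (hi : i ≤ Fintype.card n) :
    Nat.card {A : Matrix m n F // A.rank ≤ i} ≤
      (Fintype.card n).choose i *
        (Fintype.card F ^ (Fintype.card m * i) * Fintype.card F ^ (i * (Fintype.card n - i))) := by
  let f : (Σ J : {J : Finset n // #J = i}, (J.1 → m → F) × (↥J.1ᶜ → J.1 → F)) → Matrix m n F :=
    fun ⟨J, cols, coef⟩ => Matrix.of fun x j =>
      if h : j ∈ J.1 then cols ⟨j, h⟩ x else ∑ l, coef ⟨j, mem_compl.2 h⟩ l * cols l x
  have hsub : {A : Matrix m n F | A.rank ≤ i} ⊆ Set.range f := by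
    intro A hA
    obtain ⟨J, hJ, hspan⟩ := exists_finset_card_eq_forall_mem_span A.col
      (by rwa [← Matrix.rank_eq_finrank_span_cols]) hi
    have hcomb (j : n) : ∃ k : J → F, ∑ l, k l • A.col l = A.col j := by
      rw [← mem_span_range_iff_exists_fun]
      simpa [Set.image_eq_range] using hspan j
    choose k hk using hcomb
    refine ⟨⟨⟨J, hJ⟩, fun l => A.col l, fun j => k j⟩, ?_⟩
    ext x j
    by_cases h : j ∈ J
    · simp [f, h]
    · simpa [f, h, mul_comm] using congrFun (hk j) x
  calc Nat.card {A : Matrix m n F // A.rank ≤ i}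
      ≤ Nat.card (Set.range f) := Nat.card_mono (Set.toFinite _) hsub
    _ ≤ Nat.card (Σ J : {J : Finset n // #J = i}, (J.1 → m → F) × (↥J.1ᶜ → J.1 → F)) :=
      Finite.card_range_le f
    _ = _ := by
      rw [Nat.card_sigma, ← Fintype.card_finset_len, ← smul_eq_mul, ← Finset.card_univ,
        ← Finset.sum_const]
      refine Finset.sum_congr rfl fun J _ => ?_
      simp only [Nat.card_prod, Nat.card_fun]
      simp only [Nat.card_eq_fintype_card, Fintype.card_coe, card_compl, J.2, ← pow_mul]

theorem ballCount_le_card_pow (F : Type*) [Field F] [Fintype F] (m n t : ℕ) :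
    ballCount F m n t ≤ Fintype.card F ^ (m * n) := by
  calc ballCount F m n t ≤ Nat.card (Matrix (Fin m) (Fin n) F) :=
        Nat.card_le_card_of_injective Subtype.val Subtype.val_injective
    _ = Fintype.card F ^ (m * n) := by simp [Nat.card_eq_fintype_card, Matrix, ← pow_mul, mul_comm]

theorem ballCount_le_pow (F : Type*) [Field F] [Fintype F] (m : ℕ) {n i : ℕ} (hi : i ≤ n) :
    ballCount F m n i ≤ Fintype.card F ^ (n + m * i + i * (n - i)) := by
  have hq : 2 ≤ Fintype.card F := Fintype.one_lt_card
  calc ballCount F m n i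
      ≤ n.choose i * (Fintype.card F ^ (m * i) * Fintype.card F ^ (i * (n - i))) := by
        have := Matrix.natCard_rank_le_le (m := Fin m) (n := Fin n) (F := F) (i := i)
          (by rwa [Fintype.card_fin])
        rwa [Fintype.card_fin, Fintype.card_fin] at this
    _ ≤ Fintype.card F ^ n * (Fintype.card F ^ (m * i) * Fintype.card F ^ (i * (n - i))) := by
        gcongr
        exact (Nat.choose_le_two_pow n i).trans (Nat.pow_le_pow_left hq n)
    _ = Fintype.card F ^ (n + m * i + i * (n - i)) := by ring

theorem one_sub_pow_sub_one_sub_pow_le {R : Type*} [Ring R] [LinearOrder R] [IsStrictOrderedRing R]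
    (N : ℕ) {x y : R} (hx₀ : 0 ≤ x) (hx₁ : x ≤ 1) (hy : y ≤ 2) :
    (1 - x) ^ N - (1 - y) ^ N ≤ N * y := by
  have h₁ : (1 - x) ^ N ≤ 1 := pow_le_one₀ (sub_nonneg.2 hx₁) (sub_le_self _ hx₀)
  have h₂ : 1 + N * -y ≤ (1 + -y) ^ N := one_add_mul_le_pow (neg_le_neg hy) N
  rw [mul_neg, ← sub_eq_add_neg, ← sub_eq_add_neg] at h₂
  calc (1 - x) ^ N - (1 - y) ^ N ≤ 1 - (1 - N * y) := sub_le_sub h₁ h₂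
    _ = N * y := sub_sub_cancel 1 _

section SqrtCondition

variable {m n i L lam : ℝ}
  (hi : i ≤ (m + n) / 2 - √((m - n) ^ 2 / 4 + L + (m + n) / 2 + lam))
include hi

theorem le_of_le_half_add_sub_sqrt (h : 0 ≤ L + (m + n) / 2 + lam) : i ≤ n := by
  have : |(m - n) / 2| ≤ √((m - n) ^ 2 / 4 + L + (m + n) / 2 + lam) :=
    Real.abs_le_sqrt (by linarith [show ((m - n) / 2) ^ 2 = (m - n) ^ 2 / 4 by ring])
  linarith [le_abs_self ((m - n) / 2)]

theorem add_sub_mul_le_neg_of_le_half_add_sub_sqrt (hnm : n ≤ m) :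
    L + (n + m * i + i * (n - i)) - m * n ≤ -lam := by
  obtain ⟨-, hsq⟩ := Real.sqrt_le_iff.mp (show √((m - n) ^ 2 / 4 + L + (m + n) / 2 + lam) ≤
    (m + n) / 2 - i by linarith)
  linear_combination hsq + hnm / 2

end SqrtCondition

theorem stmt10 (q : ℕ) (F : Type*) [Field F] [Fintype F] (hq : Fintype.card F = q) :
    ∃ C₁ : ℝ, 0 < C₁ ∧
      ∀ (m n N : ℕ) (lam : ℝ) (i : ℕ),
        1 ≤ n → n ≤ m → 2 ≤ N → 0 ≤ lam → 1 ≤ i →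
        (i : ℝ) ≤ ((m : ℝ) + n) / 2 -
          Real.sqrt (((m : ℝ) - n) ^ 2 / 4 + Real.logb q N + ((m : ℝ) + n) / 2 + lam) →
        (1 - (ballCount F m n (i - 1) : ℝ) / (q : ℝ) ^ (m * n)) ^ N -
          (1 - (ballCount F m n i : ℝ) / (q : ℝ) ^ (m * n)) ^ N ≤
        C₁ * (q : ℝ) ^ (-lam) := by
  refine ⟨1, one_pos, fun m n N lam i _ hnm hN hlam _ hi => ?_⟩
  subst hq
  set q := Fintype.card F
  have hq : (1 : ℝ) < q := by exact_mod_cast Fintype.one_lt_card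
  have hL : 0 ≤ Real.logb q N := Real.logb_nonneg hq (by exact_mod_cast (by omega : 1 ≤ N))
  have hin : i ≤ n := by exact_mod_cast le_of_le_half_add_sub_sqrt hi (by positivity)
  have hexp := add_sub_mul_le_neg_of_le_half_add_sub_sqrt hi (by exact_mod_cast hnm)
  have hQ : (0 : ℝ) < q ^ (m * n) := by positivity
  have hB (t : ℕ) : (ballCount F m n t : ℝ) / q ^ (m * n) ≤ 1 :=
    div_le_one_of_le₀ (by exact_mod_cast ballCount_le_card_pow F m n t) hQ.le
  calc _ ≤ N * ((ballCount F m n i : ℝ) / q ^ (m * n)) :=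
        one_sub_pow_sub_one_sub_pow_le N (by positivity) (hB _) (by linarith [hB i])
    _ ≤ q ^ Real.logb q N * ((q : ℝ) ^ (n + m * i + i * (n - i)) / q ^ (m * n)) := by
        rw [Real.rpow_logb (by positivity) hq.ne' (by positivity)]
        gcongr
        exact_mod_cast ballCount_le_pow F m hin
    _ = q ^ (Real.logb q N + ((n + m * i + i * (n - i) : ℕ) : ℝ) - (m * n : ℕ)) := by
        rw [Real.rpow_sub (by positivity), Real.rpow_add (by positivity), Real.rpow_natCast,
          Real.rpow_natCast, mul_div_assoc]
    _ ≤ 1 * q ^ (-lam) := by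
        rw [one_mul]
        refine Real.rpow_le_rpow_of_exponent_le hq.le ?_
        push_cast [Nat.cast_sub hin]
        exact hexp
end

section
/- (Gabidulin codes are MRD) Let q be a prime power, 1 ≤ k ≤ n ≤ m integers, and let g₁,…,g_n ∈ F_{q^m} be linearly independent over F_q. Let C ⊆ F_{q^m}^n be the F_{q^m}-row space of the k×n matrix G whose (i,j) entry is g_j^{q^{i−1}} for 1 ≤ i ≤ k, 1 ≤ j ≤ n. Then C has F_{q^m}-dimension k and its minimum rank distance equals n − k + 1, i.e. C attains the Singleton-like bound. -/
/-!
The codeword `a ᵥ* G` is `(f(g₁), …, f(g_n))` for the `q`-linearized polynomial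
`f = ∑_{i<k} aᵢ X^{q^i}`. Such an `f` is `F_q`-linear, and for `a ≠ 0` its kernel consists of roots
of a nonzero polynomial of degree `< q^k`, so it has `F_q`-dimension `< k`. By rank–nullity on
`V = span(g)`, the codeword has rank `n - dim(V ∩ ker f) > n - k`; in particular the rows of the
Moore matrix are independent. Choosing `a ≠ 0` so that `f` kills `g₁, …, g_{k-1}` (`k - 1` linear
equations in `k` unknowns) gives a codeword of rank exactly `n - k + 1`.
-/

/-- Rank of a vector `x ∈ L^n`: the dimension over `Fq` of the `Fq`-span of its components. -/
noncomputable def vecRank (Fq : Type*) [Field Fq] {L : Type*} [Field L] [Algebra Fq L]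
    {n : ℕ} (x : Fin n → L) : ℕ :=
  Module.finrank Fq (Submodule.span Fq (Set.range x) : Submodule Fq L)

open Module

theorem LinearMap.finrank_map_add_finrank_inf_ker {K M N : Type*} [DivisionRing K]
    [AddCommGroup M] [Module K M] [AddCommGroup N] [Module K N]
    (f : M →ₗ[K] N) (V : Submodule K M) [FiniteDimensional K V] :
    finrank K (V.map f) + finrank K (V ⊓ LinearMap.ker f : Submodule K M) = finrank K V := by
  have h := LinearMap.finrank_range_add_finrank_ker (f.domRestrict V)
  rwa [LinearMap.range_domRestrict, LinearMap.ker_domRestrict, ← Submodule.finrank_map_subtype_eq,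
    Submodule.map_comap_subtype] at h

theorem vecRank_zero (K : Type*) {L : Type*} [Field K] [Field L] [Algebra K L] {n : ℕ} :
    vecRank K (0 : Fin n → L) = 0 := by
  rw [vecRank, Submodule.span_eq_bot.2 (by rintro _ ⟨i, rfl⟩; rfl), finrank_bot]

theorem vecRank_comp_add_finrank_inf_ker {K L L' : Type*} [Field K] [Field L] [Field L']
    [Algebra K L] [Algebra K L'] {n : ℕ} {g : Fin n → L} (hg : LinearIndependent K g)
    (f : L →ₗ[K] L') :
    vecRank K (f ∘ g) +
      finrank K (Submodule.span K (Set.range g) ⊓ LinearMap.ker f : Submodule K L) = n := by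
  have := FiniteDimensional.span_of_finite K (Set.finite_range g)
  rw [vecRank, Set.range_comp, Submodule.span_image, LinearMap.finrank_map_add_finrank_inf_ker,
    finrank_span_eq_card hg, Fintype.card_fin]

section LinearizedPolynomial

open Polynomial

variable (Fq : Type*) {L : Type*} [Field Fq] [Fintype Fq] [Field L] {k : ℕ}

noncomputable def linearizedPoly (a : Fin k → L) : L[X] :=
  ∑ i, C (a i) * X ^ Fintype.card Fq ^ (i : ℕ)

theorem coeff_linearizedPoly (a : Fin k → L) (j : Fin k) :
    (linearizedPoly Fq a).coeff (Fintype.card Fq ^ (j : ℕ)) = a j := by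
  have hinj := Nat.pow_right_injective (Fintype.one_lt_card (α := Fq))
  simp only [linearizedPoly, finsetSum_coeff, coeff_C_mul_X_pow, hinj.eq_iff, Fin.val_inj]
  simp

theorem linearizedPoly_ne_zero {a : Fin k → L} (ha : a ≠ 0) : linearizedPoly Fq a ≠ 0 := by
  obtain ⟨j, hj⟩ := Function.ne_iff.1 ha
  intro h
  exact hj (by rw [← coeff_linearizedPoly Fq a j, h, coeff_zero, Pi.zero_apply])

theorem degree_linearizedPoly_lt (a : Fin k → L) :
    (linearizedPoly Fq a).degree < (Fintype.card Fq ^ k : ℕ) := by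
  refine (degree_sum_le _ _).trans_lt
    ((Finset.sup_lt_iff (WithBot.bot_lt_coe _)).2 fun i _ => ?_)
  exact (degree_C_mul_X_pow_le _ _).trans_lt
    (WithBot.coe_lt_coe.2 (Nat.pow_lt_pow_right Fintype.one_lt_card i.isLt))

variable [Algebra Fq L]

noncomputable def linearizedMap (a : Fin k → L) : L →ₗ[Fq] L :=
  ∑ i, a i • ((FiniteField.frobeniusAlgHom Fq L) ^ (i : ℕ)).toLinearMap

theorem linearizedMap_apply (a : Fin k → L) (x : L) :
    linearizedMap Fq a x = ∑ i, a i * x ^ Fintype.card Fq ^ (i : ℕ) := by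
  simp [linearizedMap, FiniteField.coe_frobeniusAlgHom, pow_iterate]

theorem eval_linearizedPoly (a : Fin k → L) (x : L) :
    (linearizedPoly Fq a).eval x = linearizedMap Fq a x := by
  simp [linearizedPoly, linearizedMap_apply, eval_finsetSum]

theorem finrank_lt_of_le_ker_linearizedMap {a : Fin k → L} (ha : a ≠ 0) {W : Submodule Fq L}
    (hW : W ≤ LinearMap.ker (linearizedMap Fq a)) : finrank Fq W < k := by
  classical
  set P := linearizedPoly Fq a
  have hP := linearizedPoly_ne_zero Fq ha
  have hroots : (W : Set L) ⊆ P.roots.toFinset := fun x hx => by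
    simpa [P, mem_roots hP, eval_linearizedPoly] using hW hx
  have : Finite W := (P.roots.toFinset.finite_toSet.subset hroots).to_subtype
  refine (Nat.pow_lt_pow_iff_right (Fintype.one_lt_card (α := Fq))).1 ?_
  calc Fintype.card Fq ^ finrank Fq W = Nat.card W := by
        rw [Module.natCard_eq_pow_finrank (K := Fq), Nat.card_eq_fintype_card]
    _ ≤ P.roots.toFinset.card := by
        rw [← Set.ncard_coe_finset]
        exact Set.ncard_le_ncard hroots (Finset.finite_toSet _)
    _ ≤ P.natDegree := (Multiset.toFinset_card_le _).trans (card_roots' P)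
    _ < Fintype.card Fq ^ k := (natDegree_lt_iff_degree_lt hP).2 (degree_linearizedPoly_lt Fq a)

end LinearizedPolynomial

section MooreMatrix

open Matrix

variable {Fq L : Type*} [Field Fq] [Fintype Fq] [Field L] {n k : ℕ}

variable (Fq) in
def mooreMatrix (k : ℕ) (g : Fin n → L) : Matrix (Fin k) (Fin n) L :=
  Matrix.of fun i j => g j ^ Fintype.card Fq ^ (i : ℕ)

variable [Algebra Fq L] {g : Fin n → L}

theorem vecMul_mooreMatrix (a : Fin k → L) :
    a ᵥ* mooreMatrix Fq k g = linearizedMap Fq a ∘ g := by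
  ext j
  simp [mooreMatrix, linearizedMap_apply, vecMul, dotProduct]

theorem lt_vecRank_vecMul_mooreMatrix_add (hg : LinearIndependent Fq g) {a : Fin k → L}
    (ha : a ≠ 0) : n < vecRank Fq (a ᵥ* mooreMatrix Fq k g) + k := by
  have hrank := vecRank_comp_add_finrank_inf_ker hg (linearizedMap Fq a)
  have hker := finrank_lt_of_le_ker_linearizedMap Fq ha
    (inf_le_right (a := Submodule.span Fq (Set.range g)))
  rw [vecMul_mooreMatrix]
  omega

theorem vecMul_mooreMatrix_injective (hg : LinearIndependent Fq g) (hkn : k ≤ n) :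
    Function.Injective (mooreMatrix Fq k g).vecMulLinear := by
  refine (injective_iff_map_eq_zero _).2 fun a ha => by_contra fun ha0 => ?_
  have := lt_vecRank_vecMul_mooreMatrix_add hg ha0
  rw [vecMulLinear_apply] at ha
  rw [ha, vecRank_zero] at this
  omega

theorem exists_vecRank_vecMul_mooreMatrix_eq (hg : LinearIndependent Fq g) (hk : 1 ≤ k)
    (hkn : k ≤ n) : ∃ a ≠ 0, vecRank Fq (a ᵥ* mooreMatrix Fq k g) + k = n + 1 := by
  have hk' : k - 1 ≤ n := by omega
  let f := LinearMap.funLeft L L (Fin.castLE hk') ∘ₗ (mooreMatrix Fq k g).vecMulLinear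
  have hlt : finrank L (Fin (k - 1) → L) < finrank L (Fin k → L) := by simp; omega
  obtain ⟨a, ha, ha0⟩ :=
    (Submodule.ne_bot_iff _).1 (LinearMap.ker_ne_bot_of_finrank_lt (f := f) hlt)
  have hvanish : ∀ j, linearizedMap Fq a (g (Fin.castLE hk' j)) = 0 := fun j => by
    simpa [f, vecMul_mooreMatrix] using congrFun (LinearMap.mem_ker.1 ha) j
  refine ⟨a, ha0, le_antisymm ?_ (lt_vecRank_vecMul_mooreMatrix_add hg ha0)⟩
  have hsub : Submodule.span Fq (Set.range (g ∘ Fin.castLE hk')) ≤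
      Submodule.span Fq (Set.range g) ⊓ LinearMap.ker (linearizedMap Fq a) :=
    Submodule.span_le.2 <| Set.range_subset_iff.2 fun j =>
      ⟨Submodule.subset_span ⟨_, rfl⟩, hvanish j⟩
  have := FiniteDimensional.span_of_finite Fq (Set.finite_range g)
  have hdim := Submodule.finrank_mono hsub
  rw [finrank_span_eq_card (hg.comp _ (Fin.castLE_injective hk')), Fintype.card_fin] at hdim
  have hrank := vecRank_comp_add_finrank_inf_ker hg (linearizedMap Fq a)
  rw [vecMul_mooreMatrix]
  omega

end MooreMatrix

theorem stmt19_general (q n k : ℕ) (Fq L : Type*) [Field Fq] [Fintype Fq] [Field L] [Algebra Fq L]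
    (hq : Fintype.card Fq = q)
    (hk1 : 1 ≤ k) (hkn : k ≤ n)
    (g : Fin n → L) (hg : LinearIndependent Fq g)
    (G : Matrix (Fin k) (Fin n) L) (hG : ∀ i j, G i j = g j ^ q ^ (i : ℕ))
    (C : Submodule L (Fin n → L)) (hC : C = Submodule.span L (Set.range fun i => G i)) :
    Module.finrank L C = k ∧
    (∀ c ∈ C, c ≠ 0 → n - k + 1 ≤ vecRank Fq c) ∧
    ∃ c ∈ C, c ≠ 0 ∧ vecRank Fq c = n - k + 1 := by
  subst hq
  obtain rfl : G = mooreMatrix Fq k g := Matrix.ext hG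
  have hinj := vecMul_mooreMatrix_injective hg hkn
  have hrange : LinearMap.range (mooreMatrix Fq k g).vecMulLinear = C := by
    rw [range_vecMulLinear, hC]
    rfl
  rw [← hrange]
  refine ⟨by rw [LinearMap.finrank_range_of_inj hinj, finrank_fin_fun], ?_, ?_⟩
  · rintro _ ⟨a, rfl⟩ hc
    have ha : a ≠ 0 := by rintro rfl; exact hc (map_zero _)
    have := lt_vecRank_vecMul_mooreMatrix_add hg ha
    rw [Matrix.vecMulLinear_apply]
    omega
  · obtain ⟨a, ha0, ha⟩ := exists_vecRank_vecMul_mooreMatrix_eq hg hk1 hkn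
    refine ⟨_, ⟨a, rfl⟩, fun h => ha0 (hinj (h.trans (map_zero _).symm)), ?_⟩
    rw [Matrix.vecMulLinear_apply]
    omega

/-- Gabidulin codes are MRD: the code generated by the Moore matrix of a vector `g` with
`Fq`-linearly independent components has dimension `k` and minimum rank distance `n - k + 1`. -/
theorem stmt19 (q m n k : ℕ) (Fq L : Type*) [Field Fq] [Fintype Fq] [Field L] [Algebra Fq L]
    (hq : Fintype.card Fq = q) (hm : Module.finrank Fq L = m)
    (hk1 : 1 ≤ k) (hkn : k ≤ n) (hnm : n ≤ m)
    (g : Fin n → L) (hg : LinearIndependent Fq g)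
    (G : Matrix (Fin k) (Fin n) L) (hG : ∀ i j, G i j = g j ^ q ^ (i : ℕ))
    (C : Submodule L (Fin n → L)) (hC : C = Submodule.span L (Set.range fun i => G i)) :
    Module.finrank L C = k ∧
    (∀ c ∈ C, c ≠ 0 → n - k + 1 ≤ vecRank Fq c) ∧
    ∃ c ∈ C, c ≠ 0 ∧ vecRank Fq c = n - k + 1 :=
  stmt19_general q n k Fq L hq hk1 hkn g hg G hG C hC
end
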